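/- Let 1 < q < 3 be real, let b = sqrt(2/(3-q)) and ν = (3-q)/(q-1). Then the function x ↦ (1 + (q-1)·x²/2)^(-1/(q-1)) is integrable on ℝ and its integral equals b·sqrt(ν·π)·Γ(ν/2)/Γ((ν+1)/2), where Γ denotes the Gamma function. Consequently the normalization constant of the standard Tsallis q-Gaussian with 1 < q < 3 is C = Γ((ν+1)/2)/(b·sqrt(ν·π)·Γ(ν/2)). -/

import Mathlib

open Real MeasureTheory Set

/-!
Writing `Γ(s) (1 + x²)^(-s) = ∫₀^∞ u^(s-1) e^(-(1+x²)u) du` and integrating in `x` first turns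
`∫ (1 + x²)^(-s) dx` into a Gaussian integral inside a Gamma integral, which gives
`∫ (1 + x²)^(-s) dx = √π Γ(s - 1/2) / Γ(s)` for `s > 1/2` (Fubini applies since everything is
nonnegative). The q-Gaussian is the case `s = 1/(q-1)` after the substitution `x ↦ √((q-1)/2) x`,
and then `ν/2 = s - 1/2`, `(ν+1)/2 = s`.
-/

section OneAddSqRpow

variable {s : ℝ}

lemma integrable_one_add_sq_rpow_neg (hs : 1 / 2 < s) :
    Integrable (fun x : ℝ => (1 + x ^ 2) ^ (-s)) := by
  have h := integrable_rpow_neg_one_add_norm_sq (E := ℝ) (μ := volume) (r := 2 * s)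
    (by simp only [Module.finrank_self, Nat.cast_one]; linarith)
  convert h using 2 with x
  rw [Real.norm_eq_abs, sq_abs]
  ring_nf

lemma integral_rpow_mul_exp_neg_one_add_sq_mul (hs : 0 < s) (x : ℝ) :
    ∫ u in Ioi (0 : ℝ), u ^ (s - 1) * exp (-((1 + x ^ 2) * u)) = (1 + x ^ 2) ^ (-s) * Gamma s := by
  have hx : 0 < 1 + x ^ 2 := by positivity
  rw [integral_rpow_mul_exp_neg_mul_Ioi hs hx, one_div, inv_rpow hx.le, ← rpow_neg hx.le]

lemma integral_rpow_mul_exp_neg_one_add_sq_mul_eq {u : ℝ} (hu : 0 < u) :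
    ∫ x : ℝ, u ^ (s - 1) * exp (-((1 + x ^ 2) * u)) = √π * (u ^ (s - 1 / 2 - 1) * exp (-u)) := by
  have hsplit : (fun x : ℝ => u ^ (s - 1) * exp (-((1 + x ^ 2) * u))) =
      fun x => u ^ (s - 1) * exp (-u) * exp (-u * x ^ 2) := by
    funext x
    rw [mul_assoc, ← exp_add]
    ring_nf
  rw [hsplit, integral_const_mul, integral_gaussian, div_eq_mul_inv, sqrt_mul pi_nonneg,
    sqrt_inv, sqrt_eq_rpow u, ← rpow_neg hu.le, show s - 1 / 2 - 1 = (s - 1) + -(1 / 2) by ring,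
    rpow_add hu]
  ring

lemma integrable_rpow_mul_exp_neg_one_add_sq_mul (hs : 1 / 2 < s) :
    Integrable (Function.uncurry fun (x u : ℝ) => u ^ (s - 1) * exp (-((1 + x ^ 2) * u)))
      (volume.prod (volume.restrict (Ioi 0))) := by
  have hs0 : 0 < s := by linarith
  rw [integrable_prod_iff (by fun_prop)]
  constructor
  · refine Filter.Eventually.of_forall fun x => ?_
    have h := integrableOn_rpow_mul_exp_neg_mul_rpow (p := 1) (s := s - 1) (b := 1 + x ^ 2)
      (by linarith) one_pos (by positivity)
    simp only [rpow_one, neg_mul] at h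
    exact h
  · have hnorm : ∀ x : ℝ, ∫ u in Ioi (0 : ℝ), ‖u ^ (s - 1) * exp (-((1 + x ^ 2) * u))‖ =
        (1 + x ^ 2) ^ (-s) * Gamma s := fun x => by
      rw [← integral_rpow_mul_exp_neg_one_add_sq_mul hs0 x]
      refine setIntegral_congr_fun measurableSet_Ioi fun u (hu : 0 < u) => ?_
      exact Real.norm_of_nonneg (by positivity)
    simp only [Function.uncurry_apply_pair, hnorm]
    exact (integrable_one_add_sq_rpow_neg hs).mul_const _

lemma integral_one_add_sq_rpow_neg_mul_Gamma (hs : 1 / 2 < s) :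
    (∫ x : ℝ, (1 + x ^ 2) ^ (-s)) * Gamma s = √π * Gamma (s - 1 / 2) :=
  calc (∫ x : ℝ, (1 + x ^ 2) ^ (-s)) * Gamma s
      = ∫ x : ℝ, ∫ u in Ioi (0 : ℝ), u ^ (s - 1) * exp (-((1 + x ^ 2) * u)) := by
        simp only [integral_rpow_mul_exp_neg_one_add_sq_mul (by linarith : 0 < s),
          integral_mul_const]
    _ = ∫ u in Ioi (0 : ℝ), ∫ x : ℝ, u ^ (s - 1) * exp (-((1 + x ^ 2) * u)) :=
        integral_integral_swap (integrable_rpow_mul_exp_neg_one_add_sq_mul hs)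
    _ = ∫ u in Ioi (0 : ℝ), √π * (u ^ (s - 1 / 2 - 1) * exp (-(1 * u))) := by
        refine setIntegral_congr_fun measurableSet_Ioi fun u hu => ?_
        rw [one_mul]
        exact integral_rpow_mul_exp_neg_one_add_sq_mul_eq hu
    _ = √π * Gamma (s - 1 / 2) := by
        rw [integral_const_mul, integral_rpow_mul_exp_neg_mul_Ioi (by linarith) one_pos]
        norm_num

lemma integral_one_add_sq_rpow_neg (hs : 1 / 2 < s) :
    ∫ x : ℝ, (1 + x ^ 2) ^ (-s) = √π * Gamma (s - 1 / 2) / Gamma s := by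
  rw [← integral_one_add_sq_rpow_neg_mul_Gamma hs,
    mul_div_cancel_right₀ _ (Gamma_pos_of_pos (by linarith)).ne']

lemma integral_one_add_mul_sq_rpow_neg {a : ℝ} (ha : 0 < a) (hs : 1 / 2 < s) :
    ∫ x : ℝ, (1 + (a * x) ^ 2) ^ (-s) = a⁻¹ * (√π * Gamma (s - 1 / 2) / Gamma s) := by
  rw [Measure.integral_comp_mul_left (fun y : ℝ => (1 + y ^ 2) ^ (-s)) a,
    integral_one_add_sq_rpow_neg hs, abs_of_pos (inv_pos.2 ha), smul_eq_mul]

end OneAddSqRpow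

/-- For `1 < q < 3`, the unnormalized standard Tsallis q-Gaussian density is integrable on ℝ,
its integral equals `b·√(ν·π)·Γ(ν/2)/Γ((ν+1)/2)` where `b = √(2/(3-q))` and `ν = (3-q)/(q-1)`;
consequently the normalization constant is `C = Γ((ν+1)/2)/(b·√(ν·π)·Γ(ν/2))`. -/
theorem tsallis_qGaussian_integral_one_lt_q
    (q : ℝ) (hq1 : 1 < q) (hq3 : q < 3)
    (b : ℝ) (hb : b = Real.sqrt (2 / (3 - q)))
    (ν : ℝ) (hν : ν = (3 - q) / (q - 1)) :
    Integrable (fun x : ℝ => (1 + (q - 1) * x ^ 2 / 2) ^ (-(1 : ℝ) / (q - 1))) ∧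
    (∫ x : ℝ, (1 + (q - 1) * x ^ 2 / 2) ^ (-(1 : ℝ) / (q - 1)))
      = b * Real.sqrt (ν * π) * Real.Gamma (ν / 2) / Real.Gamma ((ν + 1) / 2) ∧
    (Real.Gamma ((ν + 1) / 2) / (b * Real.sqrt (ν * π) * Real.Gamma (ν / 2))) *
      (∫ x : ℝ, (1 + (q - 1) * x ^ 2 / 2) ^ (-(1 : ℝ) / (q - 1))) = 1 := by
  have hq : 0 < q - 1 := by linarith
  have hq' : 0 < 3 - q := by linarith
  set s := 1 / (q - 1) with hs_def
  have hs : 1 / 2 < s := by rw [div_lt_div_iff₀ two_pos hq]; linarith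
  set a := √((q - 1) / 2)
  have ha : 0 < a := sqrt_pos.2 (by positivity)
  have hf : (fun x : ℝ => (1 + (q - 1) * x ^ 2 / 2) ^ (-(1 : ℝ) / (q - 1))) =
      fun x => (1 + (a * x) ^ 2) ^ (-s) := by
    funext x
    rw [mul_pow, sq_sqrt (by positivity), neg_div, hs_def]
    ring_nf
  have hν_half : ν / 2 = s - 1 / 2 := by rw [hν, hs_def]; field_simp; ring
  have hν_succ_half : (ν + 1) / 2 = s := by rw [hν, hs_def]; field_simp; ring
  have hbν : b * √(ν * π) = a⁻¹ * √π := by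
    rw [hb, hν, ← sqrt_inv, ← sqrt_mul (by positivity), ← sqrt_mul (by positivity)]
    congr 1
    field_simp
  have hval : (∫ x : ℝ, (1 + (q - 1) * x ^ 2 / 2) ^ (-(1 : ℝ) / (q - 1)))
      = b * √(ν * π) * Gamma (ν / 2) / Gamma ((ν + 1) / 2) := by
    rw [hf, integral_one_add_mul_sq_rpow_neg ha hs, hν_half, hν_succ_half, hbν]
    ring
  have hν0 : 0 < ν := by rw [hν]; exact div_pos hq' hq
  have hb0 : 0 < b := by rw [hb]; exact sqrt_pos.2 (div_pos two_pos hq')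
  refine ⟨hf ▸ (integrable_one_add_sq_rpow_neg hs).comp_mul_left' ha.ne', hval, ?_⟩
  rw [hval]
  have := Gamma_pos_of_pos (by positivity : 0 < ν / 2)
  have := Gamma_pos_of_pos (by positivity : 0 < (ν + 1) / 2)
  have := sqrt_pos.2 (by positivity : 0 < ν * π)
  field_simp
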